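/- arXiv:1812.06946 — 2 statements merged into one kernel-verified Lean document; each statement's English description precedes it below -/
import Mathlib

section
/- For all α > 0 and all natural numbers k, n with 2α + 1 < k ≤ n, the product ∏_{j=k}^{n} (1 + α/j) is at least (n/k)^α · (1 - (α + α²)/k). -/
/-- Key single-factor estimate: `(1+1/j)^α (1-α²/j²) ≤ 1+α/j` for `0 < α < j`. -/
lemma aux_one_factor (α j : ℝ) (hα : 0 < α) (hj : α < j) :
    (1 + 1 / j) ^ α * (1 - α ^ 2 / j ^ 2) ≤ 1 + α / j := by
  have hj0 : 0 < j := hα.trans hj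
  have hfrac : α / j < 1 := (div_lt_one hj0).2 hj
  have hfrac0 : 0 < α / j := div_pos hα hj0
  have h1 : (1 + 1 / j : ℝ) ^ α ≤ Real.exp (α / j) := by
    rw [Real.rpow_def_of_pos (by positivity)]
    apply Real.exp_le_exp.2
    have hlog := Real.log_le_sub_one_of_pos (show (0:ℝ) < 1 + 1 / j by positivity)
    have : Real.log (1 + 1 / j) ≤ 1 / j := by linarith
    calc Real.log (1 + 1 / j) * α ≤ (1 / j) * α := by nlinarith
    _ = α / j := by ring
  have key : (1 - α / j) * Real.exp (α / j) ≤ 1 := by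
    have h := Real.add_one_le_exp (-(α / j))
    rw [Real.exp_neg] at h
    have he : (0:ℝ) < Real.exp (α / j) := Real.exp_pos _
    have h' : 1 - α / j ≤ (Real.exp (α / j))⁻¹ := by linarith
    calc (1 - α / j) * Real.exp (α / j) ≤ (Real.exp (α / j))⁻¹ * Real.exp (α / j) := by
          exact mul_le_mul_of_nonneg_right h' he.le
    _ = 1 := inv_mul_cancel₀ he.ne'
  have hfactor : (1 - α ^ 2 / j ^ 2) = (1 - α / j) * (1 + α / j) := by
    field_simp
    ring
  have hnn : 0 ≤ (1 - α / j) * (1 + α / j) := by nlinarith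
  calc (1 + 1 / j) ^ α * (1 - α ^ 2 / j ^ 2)
      = (1 + 1 / j) ^ α * ((1 - α / j) * (1 + α / j)) := by rw [hfactor]
    _ ≤ Real.exp (α / j) * ((1 - α / j) * (1 + α / j)) :=
        mul_le_mul_of_nonneg_right h1 hnn
    _ = ((1 - α / j) * Real.exp (α / j)) * (1 + α / j) := by ring
    _ ≤ 1 * (1 + α / j) := mul_le_mul_of_nonneg_right key (by linarith)
    _ = 1 + α / j := one_mul _

set_option maxHeartbeats 1000000 in
/-- For all α > 0 and naturals k, n with 2α + 1 < k ≤ n,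
∏_{j=k}^{n} (1 + α/j) ≥ (n/k)^α · (1 - (α + α²)/k). -/
theorem prod_one_add_div_ge (α : ℝ) (hα : 0 < α) (k n : ℕ)
    (hk : 2 * α + 1 < (k : ℝ)) (hkn : k ≤ n) :
    ((n : ℝ) / (k : ℝ)) ^ α * (1 - (α + α ^ 2) / (k : ℝ)) ≤
      ∏ j ∈ Finset.Icc k n, (1 + α / (j : ℝ)) := by
  have hk1 : (1:ℝ) < (k:ℝ) := by linarith
  have hk0 : (0:ℝ) < (k:ℝ) := by linarith
  have hαk : α < (k:ℝ) - 1 := by linarith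
  -- strengthened claim by induction
  have main : ∀ m : ℕ, k ≤ m →
      (((m:ℝ) + 1) / (k:ℝ)) ^ α * (1 - α ^ 2 * (1 / ((k:ℝ) - 1) - 1 / (m:ℝ))) ≤
        ∏ j ∈ Finset.Icc k m, (1 + α / (j : ℝ)) := by
    intro m hm
    induction m, hm using Nat.le_induction with
    | base =>
        rw [Finset.Icc_self, Finset.prod_singleton]
        have hA := aux_one_factor α (k:ℝ) hα (by linarith)
        have heq : ((k:ℝ) + 1) / (k:ℝ) = 1 + 1 / (k:ℝ) := by field_simp
        rw [heq]
        have h2 : 1 - α ^ 2 * (1 / ((k:ℝ) - 1) - 1 / (k:ℝ)) ≤ 1 - α ^ 2 / (k:ℝ) ^ 2 := by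
          have h3 : 1 / (k:ℝ) ^ 2 ≤ 1 / ((k:ℝ) - 1) - 1 / (k:ℝ) := by
            rw [div_sub_div _ _ (by linarith : (k:ℝ) - 1 ≠ 0) hk0.ne',
              div_le_div_iff₀ (by positivity) (by nlinarith)]
            nlinarith
          have h4 : α ^ 2 * (1 / (k:ℝ) ^ 2) ≤ α ^ 2 * (1 / ((k:ℝ) - 1) - 1 / (k:ℝ)) :=
            mul_le_mul_of_nonneg_left h3 (sq_nonneg α)
          have h5 : α ^ 2 * (1 / (k:ℝ) ^ 2) = α ^ 2 / (k:ℝ) ^ 2 := by ring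
          linarith
        calc (1 + 1 / (k:ℝ)) ^ α * (1 - α ^ 2 * (1 / ((k:ℝ) - 1) - 1 / (k:ℝ)))
            ≤ (1 + 1 / (k:ℝ)) ^ α * (1 - α ^ 2 / (k:ℝ) ^ 2) :=
              mul_le_mul_of_nonneg_left h2 (Real.rpow_nonneg (by positivity) _)
          _ ≤ 1 + α / (k:ℝ) := hA
    | succ n hn IH =>
        have hN : (k:ℝ) ≤ (n:ℝ) := by exact_mod_cast hn
        have hN0 : (0:ℝ) < (n:ℝ) := by linarith
        set N : ℝ := (n:ℝ) with hNdef
        have hαN : α < N + 1 := by linarith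
        have hkne : (k:ℝ) ≠ 0 := hk0.ne'
        have hN1ne : N + 1 ≠ 0 := by positivity
        rw [Finset.prod_Icc_succ_top (by omega : k ≤ n + 1)]
        push_cast
        have hA : 0 ≤ α ^ 2 * (1 / ((k:ℝ) - 1) - 1 / N) := by
          have : 1 / N ≤ 1 / ((k:ℝ) - 1) := by
            apply one_div_le_one_div_of_le (by linarith) (by linarith)
          nlinarith
        have hb : (0:ℝ) ≤ α ^ 2 / (N + 1) ^ 2 := by positivity
        have hb1 : α ^ 2 / (N + 1) ^ 2 ≤ 1 := by
          rw [div_le_one (by positivity)]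
          nlinarith
        -- the Weierstrass-type step
        have hsum : 1 - α ^ 2 * (1 / ((k:ℝ) - 1) - 1 / (N + 1)) ≤
            (1 - α ^ 2 * (1 / ((k:ℝ) - 1) - 1 / N)) * (1 - α ^ 2 / (N + 1) ^ 2) := by
          have h3 : 1 / (N + 1) + (1 / (N + 1)) ^ 2 ≤ 1 / N := by
            rw [div_pow, one_pow, div_add_div _ _ (by positivity) (by positivity),
              div_le_div_iff₀ (by positivity) (by positivity)]
            nlinarith
          have hb' : (0:ℝ) ≤ α ^ 2 * (1 / (N + 1)) ^ 2 := by positivity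
          have goal' : 1 - α ^ 2 * (1 / ((k:ℝ) - 1) - 1 / (N + 1)) ≤
              (1 - α ^ 2 * (1 / ((k:ℝ) - 1) - 1 / N)) * (1 - α ^ 2 * (1 / (N + 1)) ^ 2) := by
            have hA2 := hA
            have h4 := mul_le_mul_of_nonneg_left h3 (sq_nonneg α)
            have h5 := mul_nonneg hA hb'
            generalize hx : 1 / ((k:ℝ) - 1) = x at hA2 ⊢
            generalize hyy : 1 / N = y at hA2 h4 ⊢
            generalize hz : 1 / (N + 1) = z at h4 h5 hb' ⊢
            nlinarith [h4, h5, hb', hA2]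
          have e1 : α ^ 2 * (1 / (N + 1)) ^ 2 = α ^ 2 / (N + 1) ^ 2 := by
            rw [div_pow, one_pow, mul_one_div]
          rw [e1] at goal'
          exact goal'
        -- split the power
        have hsplit : ((N + 1 + 1) / (k:ℝ)) ^ α =
            ((N + 1) / (k:ℝ)) ^ α * ((N + 2) / (N + 1)) ^ α := by
          have heq2 : (N + 1 + 1) / (k:ℝ) = ((N + 1) / (k:ℝ)) * ((N + 2) / (N + 1)) := by
            field_simp
            ring
          rw [heq2, Real.mul_rpow (by positivity) (by positivity)]
        have hstepA : ((N + 2) / (N + 1)) ^ α * (1 - α ^ 2 / (N + 1) ^ 2) ≤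
            1 + α / (N + 1) := by
          have heq : (N + 2) / (N + 1) = 1 + 1 / (N + 1) := by
            field_simp
            ring
          rw [heq]
          exact aux_one_factor α (N + 1) hα hαN
        have hprodnn : (0:ℝ) ≤ ∏ j ∈ Finset.Icc k n, (1 + α / (j : ℝ)) := by
          apply Finset.prod_nonneg
          intro j hj
          have hkpos : 0 < k := by exact_mod_cast hk0
          have hj1 : 0 < j := lt_of_lt_of_le hkpos (Finset.mem_Icc.1 hj).1
          have : (0:ℝ) < (j:ℝ) := by exact_mod_cast hj1
          positivity
        calc ((N + 1 + 1) / (k:ℝ)) ^ α * (1 - α ^ 2 * (1 / ((k:ℝ) - 1) - 1 / (N + 1)))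
            ≤ ((N + 1 + 1) / (k:ℝ)) ^ α *
              ((1 - α ^ 2 * (1 / ((k:ℝ) - 1) - 1 / N)) * (1 - α ^ 2 / (N + 1) ^ 2)) :=
              mul_le_mul_of_nonneg_left hsum (Real.rpow_nonneg (by positivity) _)
          _ = (((N + 1) / (k:ℝ)) ^ α * (1 - α ^ 2 * (1 / ((k:ℝ) - 1) - 1 / N))) *
              (((N + 2) / (N + 1)) ^ α * (1 - α ^ 2 / (N + 1) ^ 2)) := by
              rw [hsplit]; ring
          _ ≤ (∏ j ∈ Finset.Icc k n, (1 + α / (j : ℝ))) * (1 + α / (N + 1)) := by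
              apply mul_le_mul IH hstepA _ hprodnn
              exact mul_nonneg (Real.rpow_nonneg (by positivity) _) (by linarith)
  -- now conclude
  have hmain := main n hkn
  have hN : (k:ℝ) ≤ (n:ℝ) := by exact_mod_cast hkn
  have hN0 : (0:ℝ) < (n:ℝ) := by linarith
  by_cases hy : 1 - (α + α ^ 2) / (k:ℝ) ≤ 0
  · have hprodnn : (0:ℝ) ≤ ∏ j ∈ Finset.Icc k n, (1 + α / (j : ℝ)) := by
      apply Finset.prod_nonneg
      intro j hj
      have hkpos : 0 < k := by exact_mod_cast hk0
      have hj1 : 0 < j := lt_of_lt_of_le hkpos (Finset.mem_Icc.1 hj).1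
      have : (0:ℝ) < (j:ℝ) := by exact_mod_cast hj1
      positivity
    calc ((n:ℝ) / (k:ℝ)) ^ α * (1 - (α + α ^ 2) / (k:ℝ)) ≤ 0 :=
          mul_nonpos_of_nonneg_of_nonpos (Real.rpow_nonneg (by positivity) _) hy
      _ ≤ _ := hprodnn
  · push_neg at hy
    have hy12 : 1 - (α + α ^ 2) / (k:ℝ) ≤ 1 - α ^ 2 * (1 / ((k:ℝ) - 1) - 1 / (n:ℝ)) := by
      have h1 : α ^ 2 * (1 / ((k:ℝ) - 1) - 1 / (n:ℝ)) ≤ α ^ 2 / ((k:ℝ) - 1) := by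
        have : (0:ℝ) ≤ 1 / (n:ℝ) := by positivity
        have h2 : α ^ 2 * (1 / ((k:ℝ) - 1) - 1 / (n:ℝ)) ≤ α ^ 2 * (1 / ((k:ℝ) - 1)) := by
          nlinarith
        calc α ^ 2 * (1 / ((k:ℝ) - 1) - 1 / (n:ℝ)) ≤ α ^ 2 * (1 / ((k:ℝ) - 1)) := h2
          _ = α ^ 2 / ((k:ℝ) - 1) := by ring
      have h2 : α ^ 2 / ((k:ℝ) - 1) ≤ (α + α ^ 2) / (k:ℝ) := by
        rw [div_le_div_iff₀ (by linarith) hk0]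
        nlinarith
      linarith
    have hrpow : ((n:ℝ) / (k:ℝ)) ^ α ≤ (((n:ℝ) + 1) / (k:ℝ)) ^ α := by
      apply Real.rpow_le_rpow (by positivity) _ hα.le
      gcongr
      linarith
    calc ((n:ℝ) / (k:ℝ)) ^ α * (1 - (α + α ^ 2) / (k:ℝ))
        ≤ (((n:ℝ) + 1) / (k:ℝ)) ^ α * (1 - α ^ 2 * (1 / ((k:ℝ) - 1) - 1 / (n:ℝ))) :=
          mul_le_mul hrpow hy12 hy.le (Real.rpow_nonneg (by positivity) _)
      _ ≤ _ := hmain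
end

section
/- Let α ≥ 0 and let (γ_j) be a real sequence with ∑_j |γ_j| < ∞ and 1 + α/j + γ_j > 0 for all j. Then as k, n → ∞ with k ≤ n, the product ∏_{j=k}^{n} (1 + α/j + γ_j) is asymptotically equivalent to (n/k)^α, i.e. the ratio of the product to (n/k)^α tends to 1. -/
/-!
The factors tend to `1`, so they are positive for large `j` and we may take logarithms:
`log (1 + α/j + γ_j) = α/j + γ_j + O(α²/j² + γ_j²)` and `log (1 + 1/j) = 1/j + O(1/j²)`, so
`e_j = log (1 + α/j + γ_j) - α log (1 + 1/j)` is summable. Since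
`∑_{j=k}^n α log (1 + 1/j) = α log ((n+1)/k)` telescopes, the logarithm of the ratio is
`∑_{j=k}^n e_j + α log ((n+1)/n)`, a tail of a convergent series plus a term that vanishes as
`n → ∞`.
-/

open Filter Topology Finset Real

theorem Real.abs_log_one_add_sub_self_le {x : ℝ} (hx : |x| ≤ 1 / 2) :
    |log (1 + x) - x| ≤ 2 * x ^ 2 := by
  have h := abs_log_sub_add_sum_range_le (x := -x) (by rw [abs_neg]; linarith) 1
  rw [abs_neg, sub_neg_eq_add] at h
  calc |log (1 + x) - x| = |∑ i ∈ range 1, (-x) ^ (i + 1) / (i + 1) + log (1 + x)| := by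
        simp [neg_add_eq_sub]
    _ ≤ |x| ^ (1 + 1) / (1 - |x|) := h
    _ ≤ 2 * x ^ 2 := by
        rw [div_le_iff₀ (by linarith), sq_abs]
        nlinarith [sq_nonneg x]

theorem Real.summable_log_one_add_sub_self {ι : Type*} {x : ι → ℝ}
    (hx : Summable fun i => x i ^ 2) : Summable fun i => log (1 + x i) - x i := by
  refine (hx.mul_left 2).of_norm_bounded_eventually ?_
  filter_upwards [hx.tendsto_cofinite_zero.eventually_le_const (by norm_num : (0 : ℝ) < 1 / 4)]
    with i hi
  exact abs_log_one_add_sub_self_le (abs_le_of_sq_le_sq (by linarith) (by norm_num))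

theorem summable_sq_of_summable_abs {ι : Type*} {x : ι → ℝ} (hx : Summable fun i => |x i|) :
    Summable fun i => x i ^ 2 := by
  refine hx.of_norm_bounded_eventually ?_
  filter_upwards [hx.tendsto_cofinite_zero.eventually_le_const one_pos] with i hi
  rw [Real.norm_eq_abs, abs_sq, ← sq_abs]
  nlinarith [abs_nonneg (x i)]

theorem summable_log_one_add_div_add_sub_mul_log (α : ℝ) {γ : ℕ → ℝ}
    (hγ : Summable fun j => |γ j|) :
    Summable fun j : ℕ => log (1 + α / j + γ j) - α * log (1 + 1 / (j : ℝ)) := by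
  have hinv : Summable fun j : ℕ => (1 / (j : ℝ)) ^ 2 := by
    simpa only [one_div_pow] using summable_one_div_nat_pow.mpr one_lt_two
  have hx : Summable fun j : ℕ => (α / j + γ j) ^ 2 := by
    refine .of_nonneg_of_le (fun _ => sq_nonneg _) (fun j => ?_)
      ((hinv.mul_left (2 * α ^ 2)).add ((summable_sq_of_summable_abs hγ).mul_left 2))
    rw [div_eq_mul_one_div]
    nlinarith [sq_nonneg (α * (1 / j) - γ j)]
  refine (((summable_log_one_add_sub_self hx).sub
    ((summable_log_one_add_sub_self hinv).mul_left α)).add (summable_abs_iff.mp hγ)).congr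
    fun j => ?_
  rw [← add_assoc]
  ring

def pairsAtTop : Filter (ℕ × ℕ) := atTop ⊓ 𝓟 {p | p.1 ≤ p.2}

theorem tendsto_fst_pairsAtTop : Tendsto Prod.fst pairsAtTop atTop := by
  rw [pairsAtTop, ← prod_atTop_atTop_eq]
  exact tendsto_fst.mono_left inf_le_left

theorem tendsto_snd_pairsAtTop : Tendsto Prod.snd pairsAtTop atTop := by
  rw [pairsAtTop, ← prod_atTop_atTop_eq]
  exact tendsto_snd.mono_left inf_le_left

theorem eventually_le_pairsAtTop : ∀ᶠ p in pairsAtTop, p.1 ≤ p.2 :=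
  mem_inf_of_right (mem_principal_self _)

theorem exists_forall_of_eventually_pairsAtTop {P : ℕ × ℕ → Prop}
    (h : ∀ᶠ p in pairsAtTop, P p) : ∃ K, ∀ k n, K ≤ k → k ≤ n → P (k, n) := by
  obtain ⟨⟨a, b⟩, hab⟩ := eventually_atTop.mp (eventually_inf_principal.mp h)
  exact ⟨max a b, fun k n hk hkn => hab (k, n) ⟨by grind, by grind⟩ hkn⟩

theorem tendsto_sum_Icc_pairsAtTop {G : Type*} [AddCommGroup G] [TopologicalSpace G]
    [IsTopologicalAddGroup G] {f : ℕ → G} (hf : Summable f) :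
    Tendsto (fun p : ℕ × ℕ => ∑ j ∈ Icc p.1 p.2, f j) pairsAtTop (𝓝 0) := by
  have hS := hf.hasSum.tendsto_sum_nat
  have h := ((hS.comp (tendsto_add_atTop_nat 1)).comp tendsto_snd_pairsAtTop).sub
    (hS.comp tendsto_fst_pairsAtTop)
  rw [sub_self] at h
  refine h.congr' ?_
  filter_upwards [eventually_le_pairsAtTop] with p hp
  simp only [Function.comp_apply]
  rw [← sum_Ico_eq_sub _ (by omega), Ico_add_one_right_eq_Icc]

theorem sum_Icc_log_one_add_inv {k : ℕ} (hk : 0 < k) (n : ℕ) (hkn : k ≤ n + 1) :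
    ∑ j ∈ Icc k n, log (1 + 1 / (j : ℝ)) = log (n + 1) - log k := by
  rw [← Ico_add_one_right_eq_Icc]
  have htelescope := sum_Ico_sub (fun j : ℕ => log (j : ℝ)) hkn
  push_cast at htelescope
  rw [← htelescope]
  refine sum_congr rfl fun j hj => ?_
  have hj : (0 : ℝ) < j := by exact_mod_cast hk.trans_le (mem_Ico.mp hj).1
  rw [← log_div (by positivity) hj.ne', add_div, div_self hj.ne']

theorem prod_div_rpow_eq_exp {f : ℕ → ℝ} (α : ℝ) {k n : ℕ} (hk : 0 < k) (hkn : k ≤ n)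
    (hf : ∀ j ∈ Icc k n, 0 < f j) :
    (∏ j ∈ Icc k n, f j) / ((n : ℝ) / k) ^ α =
      exp (∑ j ∈ Icc k n, (log (f j) - α * log (1 + 1 / (j : ℝ))) +
        α * (log (n + 1) - log n)) := by
  have hkR : (0 : ℝ) < k := by exact_mod_cast hk
  have hnR : (0 : ℝ) < n := by exact_mod_cast hk.trans_le hkn
  rw [sum_sub_distrib, ← mul_sum, sum_Icc_log_one_add_inv hk n (by omega),
    ← log_prod fun j hj => (hf j hj).ne', rpow_def_of_pos (by positivity),
    log_div hnR.ne' hkR.ne', exp_add, exp_sub, exp_log (prod_pos hf),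
    mul_comm_div, ← exp_sub, div_eq_mul_inv, ← exp_neg]
  ring_nf

theorem tendsto_prod_div_rpow_pairsAtTop (α : ℝ) {γ : ℕ → ℝ} (hγ : Summable fun j => |γ j|) :
    Tendsto (fun p : ℕ × ℕ => (∏ j ∈ Icc p.1 p.2, (1 + α / (j : ℝ) + γ j)) /
      ((p.2 : ℝ) / p.1) ^ α) pairsAtTop (𝓝 1) := by
  have hlog := ((tendsto_sum_Icc_pairsAtTop
    (summable_log_one_add_div_add_sub_mul_log α hγ)).add
    ((tendsto_log_nat_add_one_sub_log.const_mul α).comp tendsto_snd_pairsAtTop)).rexp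
  rw [mul_zero, add_zero, exp_zero] at hlog
  have hfactor : Tendsto (fun j : ℕ => 1 + α / (j : ℝ) + γ j) atTop (𝓝 1) := by
    simpa using (tendsto_const_div_atTop_nhds_zero_nat α).const_add 1 |>.add
      (summable_abs_iff.mp hγ).tendsto_atTop_zero
  have hpos := eventually_forall_ge_atTop.mpr (hfactor.eventually (lt_mem_nhds one_pos))
  refine hlog.congr' ?_
  filter_upwards [tendsto_fst_pairsAtTop.eventually hpos,
    tendsto_fst_pairsAtTop.eventually (eventually_gt_atTop 0), eventually_le_pairsAtTop]
    with p hf hk hkn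
  exact (prod_div_rpow_eq_exp α hk hkn fun j hj => hf j (mem_Icc.mp hj).1).symm

theorem prod_asymp_general (α : ℝ) (γ : ℕ → ℝ)
    (hsum : Summable fun j => |γ j|) :
    ∀ ε : ℝ, 0 < ε → ∃ K : ℕ, 1 ≤ K ∧ ∀ k n : ℕ, K ≤ k → k ≤ n →
      1 - ε ≤ (∏ j ∈ Finset.Icc k n, (1 + α / (j : ℝ) + γ j)) / ((n : ℝ) / (k : ℝ)) ^ α ∧
      (∏ j ∈ Finset.Icc k n, (1 + α / (j : ℝ) + γ j)) / ((n : ℝ) / (k : ℝ)) ^ α ≤ 1 + ε := by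
  intro ε hε
  obtain ⟨K, hK⟩ := exists_forall_of_eventually_pairsAtTop
    ((tendsto_prod_div_rpow_pairsAtTop α hsum).eventually
      (Icc_mem_nhds (sub_lt_self 1 hε) (lt_add_of_pos_right 1 hε)))
  exact ⟨K + 1, by omega, fun k n hk hkn => hK k n (by omega) hkn⟩

/-- Let α ≥ 0 and (γ_j) with ∑ |γ_j| < ∞ and 1 + α/j + γ_j > 0.
Then ∏_{j=k}^{n} (1 + α/j + γ_j) ∼ (n/k)^α as k, n → ∞ with k ≤ n. -/
theorem prod_asymp (α : ℝ) (hα : 0 ≤ α) (γ : ℕ → ℝ)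
    (hsum : Summable fun j => |γ j|)
    (hpos : ∀ j : ℕ, 1 ≤ j → 0 < 1 + α / (j : ℝ) + γ j) :
    ∀ ε : ℝ, 0 < ε → ∃ K : ℕ, 1 ≤ K ∧ ∀ k n : ℕ, K ≤ k → k ≤ n →
      1 - ε ≤ (∏ j ∈ Finset.Icc k n, (1 + α / (j : ℝ) + γ j)) / ((n : ℝ) / (k : ℝ)) ^ α ∧
      (∏ j ∈ Finset.Icc k n, (1 + α / (j : ℝ) + γ j)) / ((n : ℝ) / (k : ℝ)) ^ α ≤ 1 + ε :=
  prod_asymp_general α γ hsum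
end
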